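/- Let r be an invertible octonion such that the map q_r : x ↦ r x r⁻¹ is a ring automorphism of the octonions. If r is non-real, then 4·(Re r)² = |r|². -/

import Mathlib

/-- The octonions, as the Cayley–Dickson double of the quaternions:
pairs `(a, b)` of quaternions with `(a,b)(u,v) = (au - v̄ b, b ū + v a)`. -/
@[ext] structure Oct where
  x : Quaternion ℝ
  y : Quaternion ℝ

namespace Oct

noncomputable instance : Zero Oct := ⟨⟨0, 0⟩⟩
noncomputable instance : One Oct := ⟨⟨1, 0⟩⟩
noncomputable instance : Add Oct := ⟨fun p q => ⟨p.x + q.x, p.y + q.y⟩⟩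
noncomputable instance : Neg Oct := ⟨fun p => ⟨-p.x, -p.y⟩⟩
noncomputable instance : Sub Oct := ⟨fun p q => p + -q⟩
noncomputable instance : Mul Oct := ⟨fun p q => ⟨p.x * q.x - star q.y * p.y, p.y * star q.x + q.y * p.x⟩⟩
noncomputable instance : SMul ℝ Oct := ⟨fun t p => ⟨t • p.x, t • p.y⟩⟩

/-- Octonion conjugation: `(a, b)̄ = (ā, -b)`. -/
noncomputable def conj (p : Oct) : Oct := ⟨star p.x, -p.y⟩

/-- The real part of an octonion. -/
noncomputable def re (p : Oct) : ℝ := p.x.re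

/-- The Euclidean inner product on the octonions: `⟨p, q⟩ = Re (p q̄)`. -/
noncomputable def inner (p q : Oct) : ℝ := (p * conj q).re

/-- The squared norm of an octonion. -/
noncomputable def normSq (p : Oct) : ℝ := inner p p

/-- The basic imaginary unit `i` of the octonions. -/
noncomputable def i : Oct := ⟨⟨0, 1, 0, 0⟩, 0⟩

/-- The inverse of an octonion: `r⁻¹ = r̄ / |r|²`. -/
noncomputable def inv (p : Oct) : Oct := (normSq p)⁻¹ • conj p

end Oct

/-!
Write `N = |r|²`. Since `r⁻¹ = N⁻¹ r̄`, multiplicativity of `q_r` says that the map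
`x ↦ r x r̄ = N q_r(x)` satisfies `N (r (x y) r̄) = (r x r̄)(r y r̄)`. Evaluating this identity
at three pairs of basis octonions, `(i, j)`, `(ℓ, iℓ)` and `(j, ℓ)` with `ℓ = (0, 1)`, and
adding the right components gives `Q(Im r) (3 (Re r)² - |Im r|²) = 0` for a positive definite
quadratic form `Q`.
For non-real `r` the first factor is nonzero, and `3 (Re r)² = |Im r|²` is `4 (Re r)² = |r|²`.
-/

namespace Oct

@[simp] lemma zero_x : (0 : Oct).x = 0 := rfl
@[simp] lemma zero_y : (0 : Oct).y = 0 := rfl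
@[simp] lemma one_x : (1 : Oct).x = 1 := rfl
@[simp] lemma one_y : (1 : Oct).y = 0 := rfl
@[simp] lemma mul_x (p q : Oct) : (p * q).x = p.x * q.x - star q.y * p.y := rfl
@[simp] lemma mul_y (p q : Oct) : (p * q).y = p.y * star q.x + q.y * p.x := rfl
@[simp] lemma smul_x (t : ℝ) (p : Oct) : (t • p).x = t • p.x := rfl
@[simp] lemma smul_y (t : ℝ) (p : Oct) : (t • p).y = t • p.y := rfl
@[simp] lemma conj_x (p : Oct) : (conj p).x = star p.x := rfl
@[simp] lemma conj_y (p : Oct) : (conj p).y = -p.y := rfl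

lemma smul_smul (s t : ℝ) (p : Oct) : s • t • p = (s * t) • p := by
  ext <;> simp [mul_smul]

lemma mul_smul_comm (t : ℝ) (p q : Oct) : p * t • q = t • (p * q) := by
  ext <;> simp [smul_sub, smul_add]

lemma smul_mul_assoc (t : ℝ) (p q : Oct) : t • p * q = t • (p * q) := by
  ext <;> simp [smul_sub, smul_add]

lemma normSq_eq (p : Oct) : normSq p = Quaternion.normSq p.x + Quaternion.normSq p.y := by
  simp [normSq, inner, re, Quaternion.self_mul_star, Quaternion.star_mul_self]

lemma normSq_eq_zero {p : Oct} : normSq p = 0 ↔ p = 0 := by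
  rw [normSq_eq, add_eq_zero_iff_of_nonneg Quaternion.normSq_nonneg Quaternion.normSq_nonneg,
    Quaternion.normSq_eq_zero, Quaternion.normSq_eq_zero, Oct.ext_iff, zero_x, zero_y]

lemma smul_inv_eq_conj {r : Oct} (hr : normSq r ≠ 0) : normSq r • inv r = conj r := by
  rw [inv, smul_smul, mul_inv_cancel₀ hr]
  ext <;> simp

lemma normSq_smul_mul_conj_of_mul_inv {r : Oct} (hr : normSq r ≠ 0)
    (hmul : ∀ x y : Oct, r * (x * y) * inv r = r * x * inv r * (r * y * inv r)) (x y : Oct) :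
    normSq r • (r * (x * y) * conj r) = r * x * conj r * (r * y * conj r) := by
  set N := normSq r
  have hconj (p : Oct) : p * conj r = N • (p * inv r) := by
    rw [← smul_inv_eq_conj hr, mul_smul_comm]
  calc N • (r * (x * y) * conj r)
      = (N * N) • (r * (x * y) * inv r) := by rw [hconj, smul_smul]
    _ = (N * N) • (r * x * inv r * (r * y * inv r)) := by rw [hmul]
    _ = N • (r * x * inv r) * (N • (r * y * inv r)) := by
      rw [smul_mul_assoc, mul_smul_comm, smul_smul]
    _ = r * x * conj r * (r * y * conj r) := by rw [← hconj, ← hconj]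

lemma mk_re_eq_smul_one (a : ℝ) : (⟨⟨a, 0, 0, 0⟩, ⟨0, 0, 0, 0⟩⟩ : Oct) = a • 1 := by
  ext <;> simp [Quaternion.re_one, Quaternion.imI_one, Quaternion.imJ_one, Quaternion.imK_one,
    Quaternion.re_zero, Quaternion.imI_zero, Quaternion.imJ_zero, Quaternion.imK_zero]

lemma exists_eq_smul_one_or_four_mul_re_sq_eq_normSq {r : Oct}
    (h : ∀ x y : Oct, normSq r • (r * (x * y) * conj r) = r * x * conj r * (r * y * conj r)) :
    (∃ t : ℝ, r = t • (1 : Oct)) ∨ 4 * re r ^ 2 = normSq r := by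
  -- Expand at generic quaternion arguments and only then plug in literals: the `Quaternion`
  -- simp lemmas do not fire on a product of two literals, which has type `ℍ[ℝ,-1,0,-1]`.
  have hxx (p q : Quaternion ℝ) := congrArg (fun o => o.x.imK) (h ⟨p, 0⟩ ⟨q, 0⟩)
  have hyy (p q : Quaternion ℝ) := congrArg (fun o => o.x.imI) (h ⟨0, p⟩ ⟨0, q⟩)
  have hxy (p q : Quaternion ℝ) := congrArg (fun o => o.y.imJ) (h ⟨p, 0⟩ ⟨0, q⟩)
  simp only [mul_x, mul_y, conj_x, conj_y, smul_x, smul_y, normSq_eq, Quaternion.normSq_def',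
    Quaternion.re_mul, Quaternion.imI_mul, Quaternion.imJ_mul, Quaternion.imK_mul,
    Quaternion.re_star, Quaternion.imI_star, Quaternion.imJ_star, Quaternion.imK_star,
    Quaternion.re_neg, Quaternion.imI_neg, Quaternion.imJ_neg, Quaternion.imK_neg,
    Quaternion.re_sub, Quaternion.imI_sub, Quaternion.imJ_sub, Quaternion.imK_sub,
    Quaternion.re_add, Quaternion.imI_add, Quaternion.imJ_add, Quaternion.imK_add,
    Quaternion.imI_smul, Quaternion.imJ_smul, Quaternion.imK_smul,
    Quaternion.re_zero, Quaternion.imI_zero, Quaternion.imJ_zero, Quaternion.imK_zero,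
    smul_eq_mul] at hxx hyy hxy
  have hij := hxx ⟨0, 1, 0, 0⟩ ⟨0, 0, 1, 0⟩
  have hlil := hyy ⟨1, 0, 0, 0⟩ ⟨0, 1, 0, 0⟩
  have hjl := hxy ⟨0, 0, 1, 0⟩ ⟨1, 0, 0, 0⟩
  simp only [re, normSq_eq, Quaternion.normSq_def']
  obtain ⟨⟨a, b, c, d⟩, ⟨e, f, g, k⟩⟩ := r
  dsimp only at hij hlil hjl ⊢
  have key : (b^2 + c^2 + 2*d^2 + e^2 + 2*f^2 + 2*g^2 + 3*k^2)
      * (3*a^2 - (b^2 + c^2 + d^2 + e^2 + f^2 + g^2 + k^2)) = 0 := by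
    linear_combination (1/2) * hij + (1/2) * hlil + (1/2) * hjl
  rcases mul_eq_zero.1 key with hQ | hre
  · left
    have hsq : b^2 = 0 ∧ c^2 = 0 ∧ d^2 = 0 ∧ e^2 = 0 ∧ f^2 = 0 ∧ g^2 = 0 ∧ k^2 = 0 := by
      refine ⟨?_, ?_, ?_, ?_, ?_, ?_, ?_⟩ <;>
        linarith [sq_nonneg b, sq_nonneg c, sq_nonneg d, sq_nonneg e, sq_nonneg f, sq_nonneg g,
          sq_nonneg k]
    simp only [pow_eq_zero_iff two_ne_zero] at hsq
    obtain ⟨rfl, rfl, rfl, rfl, rfl, rfl, rfl⟩ := hsq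
    exact ⟨a, mk_re_eq_smul_one a⟩
  · right
    linarith

end Oct

theorem oct_inner_automorphism_condition_general (r : Oct)
    (hnonreal : ¬ ∃ t : ℝ, r = t • (1 : Oct))
    (hmul : ∀ x y : Oct, (r * (x * y)) * Oct.inv r =
      ((r * x) * Oct.inv r) * ((r * y) * Oct.inv r)) :
    4 * Oct.re r ^ 2 = Oct.normSq r := by
  have hr : Oct.normSq r ≠ 0 := fun h0 =>
    hnonreal ⟨0, by rw [Oct.normSq_eq_zero.1 h0]; ext <;> simp⟩
  exact (Oct.exists_eq_smul_one_or_four_mul_re_sq_eq_normSq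
    (Oct.normSq_smul_mul_conj_of_mul_inv hr hmul)).resolve_left hnonreal

/-- If `r` is an invertible, non-real octonion such that `q_r : x ↦ r x r⁻¹` is a ring
automorphism of the octonions, then `4 (Re r)² = |r|²`. -/
theorem oct_inner_automorphism_condition (r : Oct) (hr : r ≠ 0)
    (hnonreal : ¬ ∃ t : ℝ, r = t • (1 : Oct))
    (hadd : ∀ x y : Oct, (r * (x + y)) * Oct.inv r = (r * x) * Oct.inv r + (r * y) * Oct.inv r)
    (hmul : ∀ x y : Oct, (r * (x * y)) * Oct.inv r =
      ((r * x) * Oct.inv r) * ((r * y) * Oct.inv r))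
    (hone : (r * 1) * Oct.inv r = 1)
    (hbij : Function.Bijective (fun x : Oct => (r * x) * Oct.inv r)) :
    4 * Oct.re r ^ 2 = Oct.normSq r :=
  oct_inner_automorphism_condition_general r hnonreal hmul
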